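/- Let d ≥ 1 and let p ∈ ℝ^(d+1) be the point with coordinates p_k = (2(k-1) - d)/(2(d+1)) for k = 1, ..., d+1. Then p lies in the hyperplane H_d, its norm satisfies ‖p‖² = d(d+2)/(12(d+1)), and for every lattice point y ∈ A*_d one has ‖p - y‖ ≥ ‖p‖ (i.e., p is a point of H_d whose nearest lattice point of A*_d is the origin, at distance sqrt(d(d+2)/(12(d+1)))). -/

import Mathlib

/-! For `y ∈ A*_d` we have `‖p - y‖² - ‖p‖² = ‖y‖² - 2⟪p, y⟫`. With `n = d + 1` and `∑ yᵢ = 0`,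
the identities `∑_{i<j} (yᵢ - yⱼ)² = n ∑ yᵢ²` and `∑_{i<j} (yᵢ - yⱼ) = ∑ₖ (n - 1 - 2k) yₖ` give
`n (‖y‖² - 2⟪p, y⟫) = ∑_{i<j} z (z + 1)` with `z = yᵢ - yⱼ ∈ ℤ`, and `z (z + 1) ≥ 0` for every
integer `z`. -/

/-- The hyperplane `H_d = {x ∈ ℝ^(d+1) : ∑ x_i = 0}`. -/
def hyperplaneH (d : ℕ) : Set (EuclideanSpace ℝ (Fin (d + 1))) :=
  {x | ∑ i, x i = 0}

/-- The permutohedral lattice `A*_d`: all points of `H_d` whose coordinate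
differences are integers. -/
def Astar (d : ℕ) : Set (EuclideanSpace ℝ (Fin (d + 1))) :=
  {x | x ∈ hyperplaneH d ∧ ∀ i j, ∃ k : ℤ, x i - x j = (k : ℝ)}

open Finset

namespace Fin
variable {n : ℕ}

theorem sum_sum_Ioi_sub_sq (y : Fin n → ℝ) :
    ∑ i, ∑ j ∈ Ioi i, (y i - y j) ^ 2 = n * ∑ i, y i ^ 2 - (∑ i, y i) ^ 2 := by
  have hpairs := sum_sum_Ioi_add_eq_sum_sum_off_diag fun j i => (y i - y j) ^ 2
  have hdiag (i : Fin n) : ∑ j ∈ {i}ᶜ, (y i - y j) ^ 2 = ∑ j, (y i - y j) ^ 2 := by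
    rw [← sum_compl_add_sum {i}, sum_singleton, sub_self, zero_pow two_ne_zero, add_zero]
  have hfull : ∑ i, ∑ j, (y i - y j) ^ 2 = 2 * (n * ∑ i, y i ^ 2 - (∑ i, y i) ^ 2) := by
    simp only [sub_sq, Finset.sum_add_distrib, Finset.sum_sub_distrib, ← mul_sum, ← sum_mul,
      Finset.sum_const, card_fin, nsmul_eq_mul]
    ring
  have hswap : ∑ i, ∑ j ∈ Ioi i, (y j - y i) ^ 2 = ∑ i, ∑ j ∈ Ioi i, (y i - y j) ^ 2 :=
    sum_congr rfl fun i _ => sum_congr rfl fun j _ => sub_sq_comm _ _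
  simp only [Finset.sum_add_distrib, hswap, hdiag, hfull] at hpairs
  linarith

theorem sum_sum_Ioi_sub (y : Fin n → ℝ) :
    ∑ i, ∑ j ∈ Ioi i, (y i - y j) = ∑ i, ((n : ℝ) - 1 - 2 * i) * y i := by
  have hswap : ∑ i, ∑ j ∈ Ioi i, y j = ∑ j, ∑ i ∈ Iio j, y j :=
    sum_comm' fun i j => by simp
  have hcard (i : Fin n) : (#(Ioi i) : ℝ) = n - 1 - i := by
    have := i.isLt
    rw [card_Ioi, Nat.cast_sub (by omega), Nat.cast_sub (by omega), Nat.cast_one]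
  simp only [Finset.sum_sub_distrib, hswap, Finset.sum_const, card_Iio, nsmul_eq_mul, hcard]
  rw [← Finset.sum_sub_distrib]
  exact sum_congr rfl fun i _ => by ring

end Fin

theorem Int.sq_add_self_nonneg (k : ℤ) : 0 ≤ k ^ 2 + k := by
  linarith [Int.le_self_sq (-k), neg_sq k]

theorem card_mul_sum_sq_add_sum_mul_nonneg {n : ℕ} (y : Fin n → ℝ) (hsum : ∑ i, y i = 0)
    (hint : ∀ i j, ∃ k : ℤ, y i - y j = k) :
    0 ≤ n * ∑ i, y i ^ 2 + ∑ i, ((n : ℝ) - 1 - 2 * i) * y i := by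
  have hpair (i j : Fin n) : 0 ≤ (y i - y j) ^ 2 + (y i - y j) := by
    obtain ⟨k, hk⟩ := hint i j
    rw [hk]
    exact_mod_cast Int.sq_add_self_nonneg k
  calc 0 ≤ ∑ i, ∑ j ∈ Ioi i, ((y i - y j) ^ 2 + (y i - y j)) :=
        sum_nonneg fun i _ => sum_nonneg fun j _ => hpair i j
    _ = _ := by
      simp only [Finset.sum_add_distrib]
      rw [Fin.sum_sum_Ioi_sub_sq, Fin.sum_sum_Ioi_sub, hsum]
      ring

theorem sum_range_two_mul_sub (n : ℕ) (c : ℝ) :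
    ∑ k ∈ range n, (2 * (k : ℝ) - c) = n * (n - 1 - c) := by
  induction n with
  | zero => simp
  | succ n ih => rw [sum_range_succ, ih]; push_cast; ring

theorem sum_range_two_mul_sub_sq (n : ℕ) (c : ℝ) :
    ∑ k ∈ range n, (2 * (k : ℝ) - c) ^ 2 =
      n * (2 * (n - 1) * (2 * n - 1) / 3 - 2 * c * (n - 1) + c ^ 2) := by
  induction n with
  | zero => simp
  | succ n ih => rw [sum_range_succ, ih]; push_cast; ring

theorem two_mul_inner_le_norm_sq {d : ℕ} {p : EuclideanSpace ℝ (Fin (d + 1))}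
    (hp : ∀ k : Fin (d + 1), p k = (2 * ((k : ℕ) : ℝ) - (d : ℝ)) / (2 * ((d : ℝ) + 1)))
    {y : EuclideanSpace ℝ (Fin (d + 1))} (hy : y ∈ Astar d) :
    2 * inner ℝ p y ≤ ‖y‖ ^ 2 := by
  have key := card_mul_sum_sq_add_sum_mul_nonneg y hy.1 hy.2
  have hexpand : ‖y‖ ^ 2 - 2 * inner ℝ p y =
      ((d + 1 : ℕ) * ∑ i, y i ^ 2 + ∑ i, (((d + 1 : ℕ) : ℝ) - 1 - 2 * i) * y i) / (d + 1) := by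
    rw [EuclideanSpace.real_norm_sq_eq, PiLp.inner_apply, mul_sum, ← sum_sub_distrib,
      mul_sum, ← sum_add_distrib, sum_div]
    refine sum_congr rfl fun i _ => ?_
    rw [Real.inner_apply, hp]
    push_cast
    field_simp
    ring
  rw [← sub_nonneg, hexpand]
  positivity

theorem deep_hole_vertex (d : ℕ)
    (p : EuclideanSpace ℝ (Fin (d + 1)))
    (hp : ∀ k : Fin (d + 1), p k = (2 * ((k : ℕ) : ℝ) - (d : ℝ)) / (2 * ((d : ℝ) + 1))) :
    p ∈ hyperplaneH d ∧
    ‖p‖ ^ 2 = (d : ℝ) * ((d : ℝ) + 2) / (12 * ((d : ℝ) + 1)) ∧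
    ∀ y ∈ Astar d, ‖p‖ ≤ ‖p - y‖ := by
  refine ⟨?_, ?_, fun y hy => ?_⟩
  · change ∑ i, p i = 0
    simp only [hp, ← Finset.sum_div, Fin.sum_univ_eq_sum_range (fun k => 2 * (k : ℝ) - d),
      sum_range_two_mul_sub]
    push_cast; ring
  · rw [EuclideanSpace.real_norm_sq_eq]
    simp only [hp, div_pow, ← Finset.sum_div,
      Fin.sum_univ_eq_sum_range (fun k => (2 * (k : ℝ) - d) ^ 2), sum_range_two_mul_sub_sq]
    field_simp
    push_cast; ring
  · refine (sq_le_sq₀ (norm_nonneg _) (norm_nonneg _)).mp ?_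
    rw [norm_sub_sq_real]
    linarith [two_mul_inner_le_norm_sq hp hy]
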